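/- arXiv:2512.01129 — 4 statements merged into one kernel-verified Lean document; each statement's English description precedes it below -/
import Mathlib

section
/- (Proposition 5 (iii), Appendix A.1: the optimal assessment is interior) For every β ≥ 0, the problem max_{h ∈ [0,1]} v_E(a(h,β), β) − κ(h) admits at least one maximizer. If β = 0, then h = 0 is the unique maximizer. If β > 0, then every maximizer lies in the open interval (0,1). -/
/-!
For β = 0 the agent exerts no effort whatever the assessment h, so only the cost κ matters and
h = 0 is the unique optimum. For β > 0 the agent's effort A(h) is the zero of the strictly
decreasing marginal payoff a ↦ h·r_a(a, β) − c'(a), hence continuous in h, and a maximizer exists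
by compactness. Near h = 0 the effort, and with it the evaluator's value, grows linearly in h,
while κ(h) − κ(0) = o(h) because κ'(0) = 0. Near h = 1 the value is Lipschitz in h, while by
convexity κ(1) − κ(h) ≥ κ'(h)(1 − h) with κ'(h) → ∞. So neither endpoint is a maximizer.
-/

open Set Filter Topology

lemma hasDerivWithinAt_interior_Ici {f f' : ℝ → ℝ} {b : ℝ}
    (hf : ∀ x ∈ Ici b, HasDerivWithinAt f (f' x) (Ici b) x) :
    ∀ x ∈ interior (Ici b), HasDerivWithinAt f (f' x) (interior (Ici b)) x := by
  rw [interior_Ici]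
  exact fun x hx ↦ (hf x (Ioi_subset_Ici_self hx)).mono Ioi_subset_Ici_self

lemma monotoneOn_Ici_of_hasDerivWithinAt_nonneg {f f' : ℝ → ℝ} {b : ℝ}
    (hf : ∀ x ∈ Ici b, HasDerivWithinAt f (f' x) (Ici b) x) (hf' : ∀ x ∈ Ioi b, 0 ≤ f' x) :
    MonotoneOn f (Ici b) :=
  monotoneOn_of_hasDerivWithinAt_nonneg (convex_Ici b) (fun x hx ↦ (hf x hx).continuousWithinAt)
    (hasDerivWithinAt_interior_Ici hf)
    (by simpa only [interior_Ici] using hf')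

lemma antitoneOn_Ici_of_hasDerivWithinAt_nonpos {f f' : ℝ → ℝ} {b : ℝ}
    (hf : ∀ x ∈ Ici b, HasDerivWithinAt f (f' x) (Ici b) x) (hf' : ∀ x ∈ Ioi b, f' x ≤ 0) :
    AntitoneOn f (Ici b) :=
  antitoneOn_of_hasDerivWithinAt_nonpos (convex_Ici b) (fun x hx ↦ (hf x hx).continuousWithinAt)
    (hasDerivWithinAt_interior_Ici hf)
    (by simpa only [interior_Ici] using hf')

lemma strictAntiOn_Ici_of_hasDerivWithinAt_neg {f f' : ℝ → ℝ} {b : ℝ}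
    (hf : ∀ x ∈ Ici b, HasDerivWithinAt f (f' x) (Ici b) x) (hf' : ∀ x ∈ Ioi b, f' x < 0) :
    StrictAntiOn f (Ici b) :=
  strictAntiOn_of_hasDerivWithinAt_neg (convex_Ici b) (fun x hx ↦ (hf x hx).continuousWithinAt)
    (hasDerivWithinAt_interior_Ici hf)
    (by simpa only [interior_Ici] using hf')

lemma IsMaxOn.hasDerivWithinAt_Ici_nonpos {f : ℝ → ℝ} {f' b : ℝ} (hmax : IsMaxOn f (Ici b) b)
    (hf : HasDerivWithinAt f f' (Ici b) b) : f' ≤ 0 := by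
  have hseg : segment ℝ b (b + 1) ⊆ Ici b := by
    rw [segment_eq_Icc (by linarith)]; exact Icc_subset_Ici_self
  simpa using hmax.localize.hasFDerivWithinAt_nonpos hf
    (mem_posTangentConeAt_of_segment_subset hseg)

lemma HasDerivWithinAt.eventually_sub_lt_mul {f : ℝ → ℝ} {f' x k : ℝ} {s : Set ℝ}
    (hf : HasDerivWithinAt f f' s x) (hs : s ∈ 𝓝[>] x) (hk : f' < k) :
    ∀ᶠ y in 𝓝[>] x, f y - f x < k * (y - x) := by
  have hslope :=
    (hasDerivWithinAt_iff_tendsto_slope' self_notMem_Ioi).1 (hf.mono_of_mem_nhdsWithin hs)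
  filter_upwards [hslope.eventually_lt_const hk, self_mem_nhdsWithin] with y hy hxy
  rwa [slope_def_field, div_lt_iff₀ (sub_pos.2 hxy)] at hy

lemma HasDerivWithinAt.eventually_mul_lt_sub {f : ℝ → ℝ} {f' x k : ℝ} {s : Set ℝ}
    (hf : HasDerivWithinAt f f' s x) (hs : s ∈ 𝓝[>] x) (hk : k < f') :
    ∀ᶠ y in 𝓝[>] x, k * (y - x) < f y - f x := by
  have hslope :=
    (hasDerivWithinAt_iff_tendsto_slope' self_notMem_Ioi).1 (hf.mono_of_mem_nhdsWithin hs)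
  filter_upwards [hslope.eventually_const_lt hk, self_mem_nhdsWithin] with y hy hxy
  rwa [slope_def_field, lt_div_iff₀ (sub_pos.2 hxy)] at hy

lemma exists_nonneg_sub_le_mul_sub_of_hasDerivWithinAt {V V' : ℝ → ℝ} {b : ℝ}
    (hV : ∀ x ∈ Ici (0:ℝ), HasDerivWithinAt V (V' x) (Ici 0) x) (hV' : ContinuousOn V' (Ici 0))
    (hb : 0 ≤ b) :
    ∃ D ≥ 0, ∀ x y, 0 ≤ x → x ≤ y → y ≤ b → V y - V x ≤ D * (y - x) := by
  obtain ⟨D, hD⟩ := isCompact_Icc.exists_bound_of_continuousOn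
    (hV'.mono (Icc_subset_Ici_self : Icc 0 b ⊆ Ici 0))
  refine ⟨D, (norm_nonneg _).trans (hD 0 ⟨le_rfl, hb⟩), fun x y hx hxy hyb ↦ ?_⟩
  have := (convex_Icc 0 b).norm_image_sub_le_of_norm_hasDerivWithin_le
    (fun z hz ↦ (hV z hz.1).mono Icc_subset_Ici_self) hD ⟨hx, hxy.trans hyb⟩ ⟨hx.trans hxy, hyb⟩
  rw [Real.norm_eq_abs, Real.norm_eq_abs, abs_of_nonneg (sub_nonneg.2 hxy)] at this
  exact (le_abs_self _).trans this

lemma continuousOn_of_strictAntiOn_of_apply_eq_zero {F : ℝ → ℝ → ℝ} {f : ℝ → ℝ} {s : Set ℝ}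
    (hF : ∀ a, ContinuousOn (fun t ↦ F t a) s) (hanti : ∀ t ∈ s, StrictAntiOn (F t) (Ici 0))
    (hf : ∀ t ∈ s, 0 ≤ f t ∧ F t (f t) = 0) : ContinuousOn f s := by
  intro t₀ ht₀
  obtain ⟨hf₀, hF₀⟩ := hf t₀ ht₀
  refine tendsto_order.2 ⟨fun a ha ↦ ?_, fun a ha ↦ ?_⟩
  · rcases lt_or_ge a 0 with ha0 | ha0
    · filter_upwards [self_mem_nhdsWithin] with t ht using ha0.trans_le (hf t ht).1
    have hpos : 0 < F t₀ a := hF₀ ▸ hanti t₀ ht₀ ha0 hf₀ ha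
    filter_upwards [(hF a t₀ ht₀).eventually (lt_mem_nhds hpos), self_mem_nhdsWithin] with t hFt ht
    by_contra! hle
    linarith [(hanti t ht).antitoneOn (hf t ht).1 ha0 hle, (hf t ht).2]
  · have hneg : F t₀ a < 0 := hF₀ ▸ hanti t₀ ht₀ hf₀ (hf₀.trans ha.le) ha
    filter_upwards [(hF a t₀ ht₀).eventually (gt_mem_nhds hneg), self_mem_nhdsWithin] with t hFt ht
    by_contra! hle
    linarith [(hanti t ht).antitoneOn (hf₀.trans ha.le) (hf t ht).1 hle, (hf t ht).2]

lemma eventually_sub_lt_sub_of_hasDerivWithinAt_zero {φ κ : ℝ → ℝ} {k : ℝ} {s : Set ℝ}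
    (hk : 0 < k) (hφ : ∀ᶠ h in 𝓝[>] 0, k * h ≤ φ h - φ 0) (hκ : HasDerivWithinAt κ 0 s 0)
    (hs : s ∈ 𝓝[>] 0) : ∀ᶠ h in 𝓝[>] 0, φ 0 - κ 0 < φ h - κ h := by
  filter_upwards [hφ, hκ.eventually_sub_lt_mul hs hk] with h hφh hκh
  rw [sub_zero] at hκh
  linarith

lemma eventually_sub_lt_sub_of_tendsto_atTop {φ κ κ' : ℝ → ℝ} {L : ℝ}
    (hφ : ∀ h ∈ Ioo (0:ℝ) 1, φ 1 - φ h ≤ L * (1 - h)) (hκ : ConvexOn ℝ (Icc 0 1) κ)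
    (hκ' : ∀ h ∈ Ico (0:ℝ) 1, HasDerivWithinAt κ (κ' h) (Icc 0 1) h)
    (hκ'top : Tendsto κ' (𝓝[<] 1) atTop) : ∀ᶠ h in 𝓝[<] 1, φ 1 - κ 1 < φ h - κ h := by
  filter_upwards [hκ'top.eventually_gt_atTop L, Ioo_mem_nhdsLT zero_lt_one] with h hL hh
  have hslope : κ' h ≤ slope κ h 1 := hκ.le_slope_of_hasDerivWithinAt ⟨hh.1.le, hh.2.le⟩
    (right_mem_Icc.2 zero_le_one) hh.2 (hκ' h ⟨hh.1.le, hh.2⟩)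
  rw [slope_def_field, le_div_iff₀ (sub_pos.2 hh.2)] at hslope
  nlinarith [hφ h hh, mul_lt_mul_of_pos_right hL (sub_pos.2 hh.2)]

lemma mem_Ioo_of_isMaxOn_Icc {φ : ℝ → ℝ} {h : ℝ} (h0 : ∀ᶠ x in 𝓝[>] 0, φ 0 < φ x)
    (h1 : ∀ᶠ x in 𝓝[<] 1, φ 1 < φ x) (hh : h ∈ Icc (0:ℝ) 1) (hmax : IsMaxOn φ (Icc 0 1) h) :
    h ∈ Ioo 0 1 := by
  refine ⟨hh.1.lt_of_ne ?_, hh.2.lt_of_ne ?_⟩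
  · rintro rfl
    obtain ⟨x, hx, hxI⟩ := (h0.and (Ioo_mem_nhdsGT zero_lt_one)).exists
    exact (hmax (Ioo_subset_Icc_self hxI)).not_gt hx
  · rintro rfl
    obtain ⟨x, hx, hxI⟩ := (h1.and (Ioo_mem_nhdsLT zero_lt_one)).exists
    exact (hmax (Ioo_subset_Icc_self hxI)).not_gt hx

lemma pos_and_foc_of_isMaxOn {c c' R g : ℝ → ℝ} {h a : ℝ}
    (hc : ∀ x ∈ Ici (0:ℝ), HasDerivWithinAt c (c' x) (Ici 0) x)
    (hR : ∀ x ∈ Ici (0:ℝ), HasDerivWithinAt R (g x) (Ici 0) x)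
    (hc'0 : c' 0 = 0) (hg0 : 0 < g 0) (hh : 0 < h) (ha : 0 ≤ a)
    (hmax : IsMaxOn (fun x ↦ h * R x - c x) (Ici 0) a) : 0 < a ∧ h * g a = c' a := by
  have hderiv : ∀ x ∈ Ici (0:ℝ),
      HasDerivWithinAt (fun x ↦ h * R x - c x) (h * g x - c' x) (Ici 0) x :=
    fun x hx ↦ ((hR x hx).const_mul h).sub (hc x hx)
  have ha0 : 0 < a := by
    refine ha.lt_of_ne fun ha0 ↦ ?_
    subst ha0
    have := hmax.hasDerivWithinAt_Ici_nonpos (hderiv 0 self_mem_Ici)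
    rw [hc'0] at this
    nlinarith [mul_pos hh hg0]
  refine ⟨ha0, sub_eq_zero.1 ?_⟩
  exact (hmax.isLocalMax (Ici_mem_nhds ha0)).hasDerivAt_eq_zero
    ((hderiv a ha).hasDerivAt (Ici_mem_nhds ha0))

lemma continuousOn_of_foc {c' c'' g g' A : ℝ → ℝ}
    (hc' : ∀ x ∈ Ici (0:ℝ), HasDerivWithinAt c' (c'' x) (Ici 0) x)
    (hc''pos : ∀ x ∈ Ici (0:ℝ), 0 < c'' x) (hc'0 : c' 0 = 0)
    (hg : ∀ x ∈ Ici (0:ℝ), HasDerivWithinAt g (g' x) (Ici 0) x) (hg' : ∀ x ∈ Ici (0:ℝ), g' x ≤ 0)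
    (hA : ∀ h ∈ Ioc (0:ℝ) 1, 0 ≤ A h ∧ h * g (A h) = c' (A h)) (hA0 : A 0 = 0) :
    ContinuousOn A (Icc 0 1) := by
  refine continuousOn_of_strictAntiOn_of_apply_eq_zero (F := fun h a ↦ h * g a - c' a)
    (fun a ↦ by fun_prop) (fun h hh ↦ ?_) (fun h hh ↦ ?_)
  · refine strictAntiOn_Ici_of_hasDerivWithinAt_neg
      (fun a ha ↦ ((hg a ha).const_mul h).sub (hc' a ha)) fun a (ha : 0 < a) ↦ ?_
    nlinarith [hg' a ha.le, hc''pos a ha.le, hh.1]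
  · rcases hh.1.eq_or_lt with rfl | hpos
    · simp [hA0, hc'0]
    · exact ⟨(hA h ⟨hpos, hh.2⟩).1, sub_eq_zero.2 (hA h ⟨hpos, hh.2⟩).2⟩

lemma exists_pos_eventually_mul_le_of_foc {c' g A : ℝ → ℝ} {c''₀ : ℝ}
    (hc' : HasDerivWithinAt c' c''₀ (Ici 0) 0) (hc'0 : c' 0 = 0)
    (hg : ContinuousWithinAt g (Ici 0) 0) (hg0 : 0 < g 0)
    (hA : Tendsto A (𝓝[>] 0) (𝓝[>] 0))
    (hfoc : ∀ᶠ h in 𝓝[>] 0, h * g (A h) = c' (A h)) :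
    ∃ K > 0, ∀ᶠ h in 𝓝[>] (0:ℝ), K * h ≤ A h := by
  set M := max c''₀ 0 + 1
  have hM : 0 < M := by positivity
  have hc'M : ∀ᶠ a in 𝓝[>] (0:ℝ), c' a < M * a := by
    filter_upwards [hc'.eventually_sub_lt_mul
      (mem_of_superset self_mem_nhdsWithin Ioi_subset_Ici_self)
      (lt_of_le_of_lt (le_max_left _ _) (lt_add_one _))] with a ha
    simpa [hc'0] using ha
  have hg2 : ∀ᶠ a in 𝓝[>] (0:ℝ), g 0 / 2 < g a :=
    (hg.mono Ioi_subset_Ici_self).eventually (lt_mem_nhds (half_lt_self hg0))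
  -- c'(a) < M a and g(a) > g(0)/2 near 0, so the first-order condition forces A h ≥ g(0) h / 2M
  refine ⟨g 0 / 2 / M, by positivity, ?_⟩
  filter_upwards [hA.eventually hc'M, hA.eventually hg2, hfoc, self_mem_nhdsWithin]
    with h hcM hgA hfoch (hh : 0 < h)
  rw [div_mul_eq_mul_div, div_le_iff₀ hM]
  nlinarith [mul_lt_mul_of_pos_left hgA hh]

lemma exists_nonneg_sub_le_mul_of_foc {c' c'' g A : ℝ → ℝ}
    (hc' : ∀ x ∈ Ici (0:ℝ), HasDerivWithinAt c' (c'' x) (Ici 0) x)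
    (hc''cont : ContinuousOn c'' (Ici 0)) (hc''pos : ∀ x ∈ Ici (0:ℝ), 0 < c'' x)
    (hg : AntitoneOn g (Ici 0)) (hA : ∀ h ∈ Ioc (0:ℝ) 1, 0 ≤ A h ∧ h * g (A h) = c' (A h)) :
    ∃ K ≥ 0, ∀ h ∈ Ioc (0:ℝ) 1, A h ≤ A 1 → A 1 - A h ≤ K * (1 - h) := by
  obtain ⟨hA1, hfoc1⟩ := hA 1 ⟨one_pos, le_rfl⟩
  obtain ⟨x₀, hx₀, hmin⟩ :=
    isCompact_Icc.exists_isMinOn (nonempty_Icc.2 hA1) (hc''cont.mono Icc_subset_Ici_self)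
  have hm : 0 < c'' x₀ := hc''pos x₀ hx₀.1
  have hderiv : ∀ x ∈ Ioo 0 (A 1), HasDerivAt c' (c'' x) x :=
    fun x hx ↦ (hc' x hx.1.le).hasDerivAt (Ici_mem_nhds hx.1)
  have hgrowth := (convex_Icc 0 (A 1)).mul_sub_le_image_sub_of_le_deriv
    (fun x hx ↦ (hc' x hx.1).continuousWithinAt.mono Icc_subset_Ici_self)
    (by rw [interior_Icc]; exact fun x hx ↦ (hderiv x hx).differentiableAt.differentiableWithinAt)
    (C := c'' x₀)
    (by rw [interior_Icc]; exact fun x hx ↦ (hderiv x hx).deriv ▸ hmin (Ioo_subset_Icc_self hx))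
  -- c'(A 1) - c'(A h) = g(A 1) - h g(A h) ≤ (1 - h) g(0), while c' grows at rate ≥ c'' x₀ > 0
  refine ⟨max (g 0) 0 / c'' x₀, by positivity, fun h hh hle ↦ ?_⟩
  obtain ⟨hAh, hfoch⟩ := hA h hh
  have hc'_gap := hgrowth (A h) ⟨hAh, hle⟩ (A 1) ⟨hA1, le_rfl⟩ hle
  have hg1 : g (A 1) ≤ g (A h) := hg hAh hA1 hle
  have hgh : g (A h) ≤ max (g 0) 0 := (hg self_mem_Ici hAh hAh).trans (le_max_left _ _)
  rw [div_mul_eq_mul_div, le_div_iff₀ hm]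
  nlinarith [mul_le_mul_of_nonneg_left hgh (sub_nonneg.2 hh.2)]

lemma eventually_mul_le_sub_of_hasDerivWithinAt {V A : ℝ → ℝ} {V' K : ℝ}
    (hV : HasDerivWithinAt V V' (Ici 0) 0) (hV' : 0 < V')
    (hA : Tendsto A (𝓝[>] 0) (𝓝[>] 0)) (hAK : ∀ᶠ h in 𝓝[>] 0, K * h ≤ A h) :
    ∀ᶠ h in 𝓝[>] 0, V' / 2 * K * h ≤ V (A h) - V 0 := by
  filter_upwards [hA.eventually (hV.eventually_mul_lt_sub
    (mem_of_superset self_mem_nhdsWithin Ioi_subset_Ici_self) (half_lt_self hV')), hAK]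
    with h hVA hKA
  rw [sub_zero] at hVA
  nlinarith [mul_le_mul_of_nonneg_left hKA (half_pos hV').le]

lemma exists_comp_sub_le_mul_of_foc {c' c'' g A V V' : ℝ → ℝ}
    (hc' : ∀ x ∈ Ici (0:ℝ), HasDerivWithinAt c' (c'' x) (Ici 0) x)
    (hc''cont : ContinuousOn c'' (Ici 0)) (hc''pos : ∀ x ∈ Ici (0:ℝ), 0 < c'' x)
    (hg : AntitoneOn g (Ici 0)) (hA : ∀ h ∈ Ioc (0:ℝ) 1, 0 ≤ A h ∧ h * g (A h) = c' (A h))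
    (hV : ∀ x ∈ Ici (0:ℝ), HasDerivWithinAt V (V' x) (Ici 0) x) (hV' : ContinuousOn V' (Ici 0))
    (hVmono : MonotoneOn V (Ici 0)) :
    ∃ L, ∀ h ∈ Ioo (0:ℝ) 1, V (A 1) - V (A h) ≤ L * (1 - h) := by
  obtain ⟨K, hK, hAK⟩ := exists_nonneg_sub_le_mul_of_foc hc' hc''cont hc''pos hg hA
  have hA1 := (hA 1 ⟨one_pos, le_rfl⟩).1
  obtain ⟨D, hD, hVD⟩ := exists_nonneg_sub_le_mul_sub_of_hasDerivWithinAt hV hV' hA1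
  refine ⟨D * K, fun h hh ↦ ?_⟩
  have hAh := (hA h (Ioo_subset_Ioc_self hh)).1
  rcases le_or_gt (A h) (A 1) with hle | hlt
  · nlinarith [hVD (A h) (A 1) hAh hle le_rfl,
      mul_le_mul_of_nonneg_left (hAK h (Ioo_subset_Ioc_self hh) hle) hD]
  · nlinarith [hVmono hA1 hAh hlt.le, mul_nonneg (mul_nonneg hD hK) (sub_nonneg.2 hh.2.le)]

lemma exists_isMaxOn_and_forall_isMaxOn_mem_Ioo {c c' c'' R g g' A V V' κ κ' : ℝ → ℝ}
    (hc' : ∀ x ∈ Ici (0:ℝ), HasDerivWithinAt c (c' x) (Ici 0) x)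
    (hc'' : ∀ x ∈ Ici (0:ℝ), HasDerivWithinAt c' (c'' x) (Ici 0) x)
    (hc''cont : ContinuousOn c'' (Ici 0)) (hc'0 : c' 0 = 0)
    (hc''pos : ∀ x ∈ Ici (0:ℝ), 0 < c'' x)
    (hR : ∀ x ∈ Ici (0:ℝ), HasDerivWithinAt R (g x) (Ici 0) x)
    (hg : ∀ x ∈ Ici (0:ℝ), HasDerivWithinAt g (g' x) (Ici 0) x)
    (hg' : ∀ x ∈ Ici (0:ℝ), g' x ≤ 0) (hg0 : 0 < g 0)
    (hA : ∀ h ∈ Icc (0:ℝ) 1, 0 ≤ A h ∧ IsMaxOn (fun x ↦ h * R x - c x) (Ici 0) (A h))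
    (hA0 : A 0 = 0)
    (hV : ∀ x ∈ Ici (0:ℝ), HasDerivWithinAt V (V' x) (Ici 0) x) (hV'cont : ContinuousOn V' (Ici 0))
    (hVmono : MonotoneOn V (Ici 0)) (hV'0 : 0 < V' 0)
    (hκcont : ContinuousOn κ (Icc 0 1))
    (hκ' : ∀ h ∈ Ico (0:ℝ) 1, HasDerivWithinAt κ (κ' h) (Icc 0 1) h)
    (hκconv : ConvexOn ℝ (Icc 0 1) κ) (hκ'0 : κ' 0 = 0)
    (hκ'top : Tendsto κ' (𝓝[<] 1) atTop) :
    (∃ h ∈ Icc (0:ℝ) 1, IsMaxOn (fun h ↦ V (A h) - κ h) (Icc 0 1) h) ∧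
      ∀ h ∈ Icc (0:ℝ) 1, IsMaxOn (fun h ↦ V (A h) - κ h) (Icc 0 1) h → h ∈ Ioo 0 1 := by
  have hfoc : ∀ h ∈ Ioc (0:ℝ) 1, 0 < A h ∧ h * g (A h) = c' (A h) := fun h hh ↦
    pos_and_foc_of_isMaxOn hc' hR hc'0 hg0 hh.1 (hA h (Ioc_subset_Icc_self hh)).1
      (hA h (Ioc_subset_Icc_self hh)).2
  have hfoc' : ∀ h ∈ Ioc (0:ℝ) 1, 0 ≤ A h ∧ h * g (A h) = c' (A h) :=
    fun h hh ↦ ⟨(hfoc h hh).1.le, (hfoc h hh).2⟩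
  have hA_cont : ContinuousOn A (Icc 0 1) := continuousOn_of_foc hc'' hc''pos hc'0 hg hg' hfoc' hA0
  have hA_tendsto : Tendsto A (𝓝[>] 0) (𝓝[>] 0) := by
    refine tendsto_nhdsWithin_iff.2 ⟨?_, ?_⟩
    · simpa [hA0] using (hA_cont 0 (left_mem_Icc.2 zero_le_one)).tendsto.mono_left
        (nhdsWithin_le_of_mem (Icc_mem_nhdsGT zero_lt_one))
    · filter_upwards [Ioc_mem_nhdsGT zero_lt_one] with h hh using (hfoc h hh).1
  obtain ⟨K, hK, hAK⟩ := exists_pos_eventually_mul_le_of_foc (hc'' 0 self_mem_Ici) hc'0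
    (hg 0 self_mem_Ici).continuousWithinAt hg0 hA_tendsto
    (by filter_upwards [Ioc_mem_nhdsGT zero_lt_one] with h hh using (hfoc h hh).2)
  have hVA : ∀ᶠ h in 𝓝[>] 0, V' 0 / 2 * K * h ≤ V (A h) - V (A 0) := by
    simpa only [hA0] using
      eventually_mul_le_sub_of_hasDerivWithinAt (hV 0 self_mem_Ici) hV'0 hA_tendsto hAK
  have hnear0 := eventually_sub_lt_sub_of_hasDerivWithinAt_zero (φ := fun h ↦ V (A h))
    (by positivity) hVA (hκ'0 ▸ hκ' 0 ⟨le_rfl, zero_lt_one⟩) (Icc_mem_nhdsGT zero_lt_one)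
  obtain ⟨L, hL⟩ := exists_comp_sub_le_mul_of_foc hc'' hc''cont hc''pos
    (antitoneOn_Ici_of_hasDerivWithinAt_nonpos hg fun x (hx : 0 < x) ↦ hg' x hx.le) hfoc' hV hV'cont
    hVmono
  have hnear1 := eventually_sub_lt_sub_of_tendsto_atTop (φ := fun h ↦ V (A h)) hL hκconv hκ' hκ'top
  have hV_cont : ContinuousOn V (Ici 0) := fun x hx ↦ (hV x hx).continuousWithinAt
  have hcont : ContinuousOn (fun h ↦ V (A h) - κ h) (Icc 0 1) :=
    (hV_cont.comp hA_cont fun h hh ↦ (hA h hh).1).sub hκcont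
  exact ⟨isCompact_Icc.exists_isMaxOn (nonempty_Icc.2 zero_le_one) hcont,
    fun h hh hmax ↦ mem_Ioo_of_isMaxOn_Icc hnear0 hnear1 hh hmax⟩

theorem stmt_14_general
    -- effort cost c with first and second derivatives c', c'' on [0,∞)
    (c c' c'' : ℝ → ℝ)
    (hc' : ∀ a ∈ Ici (0:ℝ), HasDerivWithinAt c (c' a) (Ici 0) a)
    (hc'' : ∀ a ∈ Ici (0:ℝ), HasDerivWithinAt c' (c'' a) (Ici 0) a)
    (hc''cont : ContinuousOn c'' (Ici 0))
    (hc'0 : c' 0 = 0)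
    (hc''pos : ∀ a ∈ Ici (0:ℝ), 0 < c'' a)
    -- effect of effort r with partial derivatives ra (in a), raa, rab
    (r ra raa : ℝ → ℝ → ℝ)
    (hra : ∀ β ∈ Ici (0:ℝ), ∀ a ∈ Ici (0:ℝ),
      HasDerivWithinAt (fun x => r x β) (ra a β) (Ici 0) a)
    (hraa : ∀ β ∈ Ici (0:ℝ), ∀ a ∈ Ici (0:ℝ),
      HasDerivWithinAt (fun x => ra x β) (raa a β) (Ici 0) a)
    (hr0' : ∀ a ∈ Ici (0:ℝ), r a 0 = 0)
    (hraanp : ∀ a ∈ Ici (0:ℝ), ∀ β ∈ Ici (0:ℝ), raa a β ≤ 0)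
    (hra0 : ∀ β > (0:ℝ), 0 < ra 0 β)
    -- A h β is the unique maximizer over [0,∞) of a ↦ h·r(a,β) − c(a)
    (A : ℝ → ℝ → ℝ)
    (hA : ∀ h ∈ Icc (0:ℝ) 1, ∀ β ∈ Ici (0:ℝ),
      A h β ∈ Ici (0:ℝ) ∧
      IsMaxOn (fun x => h * r x β - c x) (Ici 0) (A h β) ∧
      ∀ x ∈ Ici (0:ℝ), IsMaxOn (fun y => h * r y β - c y) (Ici 0) x → x = A h β)
    -- assessment cost κ : continuous on [0,1], C¹ on [0,1), strictly increasing
    -- and strictly convex, κ'(0) = 0, κ'(h) → ∞ as h → 1⁻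
    (κ κ' : ℝ → ℝ)
    (hκcont : ContinuousOn κ (Icc 0 1))
    (hκ' : ∀ h ∈ Ico (0:ℝ) 1, HasDerivWithinAt κ (κ' h) (Icc 0 1) h)
    (hκmono : StrictMonoOn κ (Icc 0 1))
    (hκconv : StrictConvexOn ℝ (Icc 0 1) κ)
    (hκ'0 : κ' 0 = 0)
    (hκ'top : Tendsto κ' (nhdsWithin 1 (Iio 1)) atTop)
    -- the evaluator's valuation vE with partial derivative vEa in effort
    (vE vEa : ℝ → ℝ → ℝ)
    (hvEa : ∀ β ∈ Ici (0:ℝ), ∀ a ∈ Ici (0:ℝ),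
      HasDerivWithinAt (fun x => vE x β) (vEa a β) (Ici 0) a)
    (hvEacont : ContinuousOn (fun p : ℝ × ℝ => vEa p.1 p.2) (Ici (0:ℝ) ×ˢ Ici (0:ℝ)))
    (hvEmono1 : ∀ β ∈ Ici (0:ℝ), StrictMonoOn (fun a => vE a β) (Ici 0))
    (hvEa0 : ∀ β > (0:ℝ), 0 < vEa 0 β) :
    ∀ β ∈ Ici (0:ℝ),
      -- the problem max_{h ∈ [0,1]} vE(A(h,β),β) − κ(h) admits a maximizer
      (∃ h ∈ Icc (0:ℝ) 1, IsMaxOn (fun h' => vE (A h' β) β - κ h') (Icc 0 1) h) ∧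
      -- if β = 0, then h = 0 is the unique maximizer
      (β = 0 →
        IsMaxOn (fun h' => vE (A h' β) β - κ h') (Icc 0 1) 0 ∧
        ∀ h ∈ Icc (0:ℝ) 1, IsMaxOn (fun h' => vE (A h' β) β - κ h') (Icc 0 1) h → h = 0) ∧
      -- if β > 0, every maximizer lies in (0,1)
      (0 < β → ∀ h ∈ Icc (0:ℝ) 1,
        IsMaxOn (fun h' => vE (A h' β) β - κ h') (Icc 0 1) h → h ∈ Ioo (0:ℝ) 1) := by
  have hc'_mono : MonotoneOn c' (Ici 0) :=
    monotoneOn_Ici_of_hasDerivWithinAt_nonneg hc'' fun x (hx : 0 < x) ↦ (hc''pos x hx.le).le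
  have hc_mono : MonotoneOn c (Ici 0) :=
    monotoneOn_Ici_of_hasDerivWithinAt_nonneg hc' fun x (hx : 0 < x) ↦
      hc'0 ▸ hc'_mono self_mem_Ici hx.le hx.le
  have hA_zero : ∀ h ∈ Icc (0:ℝ) 1, ∀ β ∈ Ici (0:ℝ), (∀ x ∈ Ici (0:ℝ), h * r x β = 0) →
      A h β = 0 := by
    intro h hh β hβ hzero
    refine ((hA h hh β hβ).2.2 0 self_mem_Ici (isMaxOn_iff.2 fun x hx ↦ ?_)).symm
    simp only [hzero x hx, hzero 0 self_mem_Ici]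
    linarith [hc_mono self_mem_Ici hx hx]
  intro β hβ
  rcases (mem_Ici.1 hβ).eq_or_lt with rfl | hβpos
  · have hA0 : ∀ h ∈ Icc (0:ℝ) 1, A h 0 = 0 :=
      fun h hh ↦ hA_zero h hh 0 hβ fun x hx ↦ by rw [hr0' x hx, mul_zero]
    have hlt : ∀ h ∈ Icc (0:ℝ) 1, h ≠ 0 → vE (A h 0) 0 - κ h < vE (A 0 0) 0 - κ 0 := by
      intro h hh hne
      rw [hA0 h hh, hA0 0 (left_mem_Icc.2 zero_le_one)]
      linarith [hκmono (left_mem_Icc.2 zero_le_one) hh (hh.1.lt_of_ne' hne)]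
    have hmax : IsMaxOn (fun h ↦ vE (A h 0) 0 - κ h) (Icc 0 1) 0 := isMaxOn_iff.2 fun h hh ↦ by
      rcases eq_or_ne h 0 with rfl | hne
      exacts [le_rfl, (hlt h hh hne).le]
    exact ⟨⟨0, left_mem_Icc.2 zero_le_one, hmax⟩, fun _ ↦ ⟨hmax, fun h hh hmaxh ↦ by_contra
      fun hne ↦ (hlt h hh hne).not_ge (hmaxh (left_mem_Icc.2 zero_le_one))⟩,
      fun h ↦ (lt_irrefl 0 h).elim⟩
  · obtain ⟨hexists, hinterior⟩ := exists_isMaxOn_and_forall_isMaxOn_mem_Ioo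
      (R := fun x ↦ r x β) (g := fun x ↦ ra x β) (g' := fun x ↦ raa x β) (V := fun x ↦ vE x β)
      (V' := fun x ↦ vEa x β) hc' hc'' hc''cont hc'0 hc''pos (hra β hβ) (hraa β hβ)
      (fun x hx ↦ hraanp x hx β hβ) (hra0 β hβpos)
      (fun h hh ↦ ⟨(hA h hh β hβ).1, (hA h hh β hβ).2.1⟩)
      (hA_zero 0 (left_mem_Icc.2 zero_le_one) β hβ fun x _ ↦ zero_mul _) (hvEa β hβ)
      (hvEacont.comp (continuousOn_id.prodMk continuousOn_const) fun x hx ↦ ⟨hx, hβ⟩)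
      (hvEmono1 β hβ).monotoneOn (hvEa0 β hβpos) hκcont hκ' hκconv.convexOn hκ'0 hκ'top
    exact ⟨hexists, fun hβ0 ↦ absurd hβ0 hβpos.ne', fun _ ↦ hinterior⟩

theorem stmt_14
    -- effort cost c with first and second derivatives c', c'' on [0,∞)
    (c c' c'' : ℝ → ℝ)
    (hc' : ∀ a ∈ Ici (0:ℝ), HasDerivWithinAt c (c' a) (Ici 0) a)
    (hc'' : ∀ a ∈ Ici (0:ℝ), HasDerivWithinAt c' (c'' a) (Ici 0) a)
    (hc''cont : ContinuousOn c'' (Ici 0))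
    (hc'0 : c' 0 = 0)
    (hc''pos : ∀ a ∈ Ici (0:ℝ), 0 < c'' a)
    (hc'top : Tendsto c' atTop atTop)
    -- effect of effort r with partial derivatives ra (in a), raa, rab
    (r ra raa rab : ℝ → ℝ → ℝ)
    (hra : ∀ β ∈ Ici (0:ℝ), ∀ a ∈ Ici (0:ℝ),
      HasDerivWithinAt (fun x => r x β) (ra a β) (Ici 0) a)
    (hraa : ∀ β ∈ Ici (0:ℝ), ∀ a ∈ Ici (0:ℝ),
      HasDerivWithinAt (fun x => ra x β) (raa a β) (Ici 0) a)
    (hrab : ∀ a ∈ Ici (0:ℝ), ∀ β ∈ Ici (0:ℝ),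
      HasDerivWithinAt (fun y => ra a y) (rab a β) (Ici 0) β)
    (hr0 : ∀ β ∈ Ici (0:ℝ), r 0 β = 0)
    (hr0' : ∀ a ∈ Ici (0:ℝ), r a 0 = 0)
    (hraanp : ∀ a ∈ Ici (0:ℝ), ∀ β ∈ Ici (0:ℝ), raa a β ≤ 0)
    (hra0 : ∀ β > (0:ℝ), 0 < ra 0 β)
    (hrabpos : ∀ a ∈ Ici (0:ℝ), ∀ β > (0:ℝ), 0 < rab a β)
    (hralim : ∀ β > (0:ℝ), Tendsto (fun a => ra a β / c' a) atTop (nhds 0))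
    -- A h β is the unique maximizer over [0,∞) of a ↦ h·r(a,β) − c(a)
    (A : ℝ → ℝ → ℝ)
    (hA : ∀ h ∈ Icc (0:ℝ) 1, ∀ β ∈ Ici (0:ℝ),
      A h β ∈ Ici (0:ℝ) ∧
      IsMaxOn (fun x => h * r x β - c x) (Ici 0) (A h β) ∧
      ∀ x ∈ Ici (0:ℝ), IsMaxOn (fun y => h * r y β - c y) (Ici 0) x → x = A h β)
    -- assessment cost κ : continuous on [0,1], C¹ on [0,1), strictly increasing
    -- and strictly convex, κ'(0) = 0, κ'(h) → ∞ as h → 1⁻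
    (κ κ' : ℝ → ℝ)
    (hκcont : ContinuousOn κ (Icc 0 1))
    (hκ' : ∀ h ∈ Ico (0:ℝ) 1, HasDerivWithinAt κ (κ' h) (Icc 0 1) h)
    (hκ'cont : ContinuousOn κ' (Ico 0 1))
    (hκmono : StrictMonoOn κ (Icc 0 1))
    (hκconv : StrictConvexOn ℝ (Icc 0 1) κ)
    (hκ'0 : κ' 0 = 0)
    (hκ'top : Tendsto κ' (nhdsWithin 1 (Iio 1)) atTop)
    -- the evaluator's valuation vE with partial derivative vEa in effort
    (vE vEa : ℝ → ℝ → ℝ)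
    (hvEa : ∀ β ∈ Ici (0:ℝ), ∀ a ∈ Ici (0:ℝ),
      HasDerivWithinAt (fun x => vE x β) (vEa a β) (Ici 0) a)
    (hvEacont : ContinuousOn (fun p : ℝ × ℝ => vEa p.1 p.2) (Ici (0:ℝ) ×ˢ Ici (0:ℝ)))
    (hvEcont : ContinuousOn (fun p : ℝ × ℝ => vE p.1 p.2) (Ici (0:ℝ) ×ˢ Ici (0:ℝ)))
    (hvEmono1 : ∀ β ∈ Ici (0:ℝ), StrictMonoOn (fun a => vE a β) (Ici 0))
    (hvEmono2 : ∀ a ∈ Ici (0:ℝ), StrictMonoOn (fun β => vE a β) (Ici 0))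
    (hvEconc : ∀ β ∈ Ici (0:ℝ), ConcaveOn ℝ (Ici 0) (fun a => vE a β))
    (hvEa0 : ∀ β > (0:ℝ), 0 < vEa 0 β) :
    ∀ β ∈ Ici (0:ℝ),
      -- the problem max_{h ∈ [0,1]} vE(A(h,β),β) − κ(h) admits a maximizer
      (∃ h ∈ Icc (0:ℝ) 1, IsMaxOn (fun h' => vE (A h' β) β - κ h') (Icc 0 1) h) ∧
      -- if β = 0, then h = 0 is the unique maximizer
      (β = 0 →
        IsMaxOn (fun h' => vE (A h' β) β - κ h') (Icc 0 1) 0 ∧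
        ∀ h ∈ Icc (0:ℝ) 1, IsMaxOn (fun h' => vE (A h' β) β - κ h') (Icc 0 1) h → h = 0) ∧
      -- if β > 0, every maximizer lies in (0,1)
      (0 < β → ∀ h ∈ Icc (0:ℝ) 1,
        IsMaxOn (fun h' => vE (A h' β) β - κ h') (Icc 0 1) h → h ∈ Ioo (0:ℝ) 1) :=
  stmt_14_general c c' c'' hc' hc'' hc''cont hc'0 hc''pos r ra raa hra hraa hr0' hraanp hra0 A hA κ
    κ' hκcont hκ' hκmono hκconv hκ'0 hκ'top vE vEa hvEa hvEacont hvEmono1 hvEa0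
end

section
/- (Proposition 6, Appendix A.1) Define φ = (c′)⁻¹ (a well-defined strictly increasing bijection of [0,∞)), a(h,β) = φ(h·β), and R(h,β) = β·φ(h·β). Then: (1) for every (h,β) ∈ [0,1] × [0,∞), a(h,β) is the unique maximizer over a ∈ [0,∞) of h·β·a − c(a); (2) for each β ≥ 0, the map h ↦ a(h,β) is concave on [0,1]; (3) a has increasing differences: a(h₂,β₂) − a(h₁,β₂) ≥ a(h₂,β₁) − a(h₁,β₁) whenever 0 ≤ h₁ ≤ h₂ ≤ 1 and 0 ≤ β₁ ≤ β₂; (4) R has strictly increasing differences: R(h₂,β₂) − R(h₁,β₂) > R(h₂,β₁) − R(h₁,β₁) whenever 0 ≤ h₁ < h₂ ≤ 1 and 0 ≤ β₁ < β₂. -/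
/-! The maximizer is pinned down by the first-order condition `c' a = h β` because `c` is strictly
convex. As `c'` is convex and increasing, its inverse `φ` is concave. The condition
`c''' c' ≤ c''²` makes `log ∘ c'` concave, so its inverse `φ ∘ exp` is convex; hence
`φ (h β) = (φ ∘ exp) (log h + log β)`, a convex function of a sum, has increasing differences.
Multiplying by `β` and using that `φ` is strictly increasing makes the differences of `β φ (h β)`
strictly increasing. -/

open Set Filter Real

theorem StrictMonoOn.strictMonoOn_of_rightInvOn {α β : Type*} [LinearOrder α] [Preorder β]
    {f : α → β} {g : β → α} {s : Set α} {t : Set β} (hf : StrictMonoOn f s)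
    (hg : MapsTo g t s) (hfg : RightInvOn g f t) : StrictMonoOn g t :=
  fun y₁ hy₁ y₂ hy₂ h => by rwa [← hf.lt_iff_lt (hg hy₁) (hg hy₂), hfg hy₁, hfg hy₂]

section RightInverse

variable {𝕜 : Type*} [Field 𝕜] [LinearOrder 𝕜] {f g : 𝕜 → 𝕜} {s t : Set 𝕜}

theorem ConvexOn.concaveOn_of_rightInvOn (hf : ConvexOn 𝕜 s f) (hf_mono : StrictMonoOn f s)
    (ht : Convex 𝕜 t) (hg : MapsTo g t s) (hfg : RightInvOn g f t) : ConcaveOn 𝕜 t g := by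
  refine ⟨ht, fun y₁ hy₁ y₂ hy₂ a b ha hb hab => ?_⟩
  have hy := ht hy₁ hy₂ ha hb hab
  rw [← hf_mono.le_iff_le (hf.1 (hg hy₁) (hg hy₂) ha hb hab) (hg hy), hfg hy]
  simpa only [hfg hy₁, hfg hy₂] using hf.2 (hg hy₁) (hg hy₂) ha hb hab

theorem ConcaveOn.convexOn_of_rightInvOn (hf : ConcaveOn 𝕜 s f) (hf_mono : StrictMonoOn f s)
    (ht : Convex 𝕜 t) (hg : MapsTo g t s) (hfg : RightInvOn g f t) : ConvexOn 𝕜 t g := by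
  refine ⟨ht, fun y₁ hy₁ y₂ hy₂ a b ha hb hab => ?_⟩
  have hy := ht hy₁ hy₂ ha hb hab
  rw [← hf_mono.le_iff_le (hg hy) (hf.1 (hg hy₁) (hg hy₂) ha hb hab), hfg hy]
  simpa only [hfg hy₁, hfg hy₂] using hf.2 (hg hy₁) (hg hy₂) ha hb hab

end RightInverse

theorem ConvexOn.map_add_sub_map_add_le {𝕜 : Type*} [Field 𝕜] [LinearOrder 𝕜]
    [IsStrictOrderedRing 𝕜] {f : 𝕜 → 𝕜} {s : Set 𝕜} (hf : ConvexOn 𝕜 s f) {a b c d : 𝕜}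
    (hac : a + c ∈ s) (hbd : b + d ∈ s) (hab : a ≤ b) (hcd : c ≤ d) :
    f (b + c) - f (a + c) ≤ f (b + d) - f (a + d) := by
  rcases (add_nonneg (sub_nonneg.2 hab) (sub_nonneg.2 hcd)).eq_or_lt with h0 | hpos
  · obtain rfl : b = a := by linarith
    obtain rfl : d = c := by linarith
    rfl
  -- `b + c` and `a + d` are the combinations of `a + c` and `b + d` with weights `(t, 1 - t)`
  -- and `(1 - t, t)`.
  set t := (d - c) / (b - a + (d - c)) with ht_def
  have ht : 0 ≤ t := div_nonneg (sub_nonneg.2 hcd) hpos.le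
  have ht' : 0 ≤ 1 - t := by rw [sub_nonneg, div_le_one hpos]; linarith
  have hbc := hf.2 hac hbd ht ht' (by ring)
  have had := hf.2 hac hbd ht' ht (by ring)
  have e₁ : t • (a + c) + (1 - t) • (b + d) = b + c := by
    simp only [smul_eq_mul, ht_def]; field_simp; ring
  have e₂ : (1 - t) • (a + c) + t • (b + d) = a + d := by
    simp only [smul_eq_mul, ht_def]; field_simp; ring
  rw [e₁] at hbc
  rw [e₂] at had
  simp only [smul_eq_mul] at hbc had
  linear_combination hbc + had

theorem StrictConvexOn.isMaxOn_sub_iff {S : Set ℝ} {f : ℝ → ℝ} {m a x : ℝ}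
    (hf : StrictConvexOn ℝ S f) (ha : a ∈ S) (hfa : HasDerivWithinAt f m S a) (hx : x ∈ S) :
    IsMaxOn (fun y => m * y - f y) S x ↔ x = a := by
  have key : ∀ y ∈ S, y ≠ a → m * y - f y < m * a - f a := by
    intro y hy hya
    rcases hya.lt_or_gt with hlt | hlt
    · have := hf.slope_lt_of_hasDerivWithinAt hy ha hlt hfa
      rw [slope_def_field, div_lt_iff₀ (sub_pos.2 hlt)] at this
      linear_combination this
    · have := hf.lt_slope_of_hasDerivWithinAt ha hy hlt hfa
      rw [slope_def_field, lt_div_iff₀ (sub_pos.2 hlt)] at this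
      linear_combination this
  constructor
  · intro hmax
    by_contra hxa
    exact (key x hx hxa).not_ge (hmax ha)
  · rintro rfl y hy
    rcases eq_or_ne y x with rfl | hyx
    · exact le_refl (m * y - f y)
    · exact (key y hy hyx).le

theorem hasDerivWithinAt_interior {D : Set ℝ} {f f' : ℝ → ℝ}
    (hf : ∀ x ∈ D, HasDerivWithinAt f (f' x) D x) :
    ∀ x ∈ interior D, HasDerivWithinAt f (f' x) (interior D) x :=
  fun x hx => (hf x (interior_subset hx)).mono interior_subset

theorem strictConvexOn_of_hasDerivWithinAt {D : Set ℝ} (hD : Convex ℝ D) {f f' : ℝ → ℝ}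
    (hf : ∀ x ∈ D, HasDerivWithinAt f (f' x) D x) (hf' : StrictMonoOn f' D) :
    StrictConvexOn ℝ D f :=
  StrictMonoOn.strictConvexOn_of_deriv hD (fun x hx => (hf x hx).continuousWithinAt) <|
    (hf'.mono interior_subset).congr
      (deriv_eqOn isOpen_interior (hasDerivWithinAt_interior hf)).symm

theorem concaveOn_log_comp_of_mul_le_sq {U : Set ℝ} (hU : IsOpen U) (hUc : Convex ℝ U)
    {f f' f'' : ℝ → ℝ} (hf : ∀ x ∈ U, HasDerivAt f (f' x) x)
    (hf' : ∀ x ∈ U, HasDerivAt f' (f'' x) x) (hpos : ∀ x ∈ U, 0 < f x)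
    (hle : ∀ x ∈ U, f'' x * f x ≤ f' x ^ 2) : ConcaveOn ℝ U (fun x => log (f x)) := by
  refine concaveOn_of_hasDerivWithinAt2_nonpos hUc (f' := fun x => f' x / f x)
    (f'' := fun x => (f'' x * f x - f' x * f' x) / f x ^ 2)
    (fun x hx => ((hf x hx).continuousAt.log (hpos x hx).ne').continuousWithinAt)
    ?_ ?_ ?_ <;> simp only [hU.interior_eq]
  · exact fun x hx => ((hf x hx).log (hpos x hx).ne').hasDerivWithinAt
  · exact fun x hx => ((hf' x hx).div (hf x hx) (hpos x hx).ne').hasDerivWithinAt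
  · exact fun x hx => div_nonpos_of_nonpos_of_nonneg (by nlinarith [hle x hx]) (sq_nonneg _)

theorem convexOn_comp_exp_of_rightInvOn {f g : ℝ → ℝ}
    (hf_conc : ConcaveOn ℝ (Ioi 0) (fun x => log (f x))) (hf : StrictMonoOn f (Ici 0))
    (hf0 : f 0 = 0) (hg : MapsTo g (Ici 0) (Ici 0)) (hfg : RightInvOn g f (Ici 0)) :
    ConvexOn ℝ univ (g ∘ exp) := by
  have hg0 : g 0 = 0 :=
    hf.injOn (hg self_mem_Ici) self_mem_Ici (by rw [hfg self_mem_Ici, hf0])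
  have hf_pos : MapsTo f (Ioi 0) (Ioi 0) := fun x hx =>
    hf0 ▸ hf self_mem_Ici (Ioi_subset_Ici_self hx) hx
  refine hf_conc.convexOn_of_rightInvOn
    (strictMonoOn_log.comp (hf.mono Ioi_subset_Ici_self) hf_pos) convex_univ
    (fun s _ => hg0 ▸ hf.strictMonoOn_of_rightInvOn hg hfg self_mem_Ici
      (Ioi_subset_Ici_self (exp_pos s)) (exp_pos s)) fun s _ => ?_
  simp only [Function.comp_apply, hfg (Ioi_subset_Ici_self (exp_pos s)), log_exp]

theorem sub_le_sub_of_convexOn_comp_exp {φ : ℝ → ℝ} (hφ : MonotoneOn φ (Ici 0))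
    (hψ : ConvexOn ℝ univ (φ ∘ exp)) ⦃h₁ h₂ β₁ β₂ : ℝ⦄ (hh₁ : 0 ≤ h₁) (hh : h₁ ≤ h₂)
    (hβ₁ : 0 ≤ β₁) (hβ : β₁ ≤ β₂) :
    φ (h₂ * β₁) - φ (h₁ * β₁) ≤ φ (h₂ * β₂) - φ (h₁ * β₂) := by
  have hh₂ := hh₁.trans hh
  have hβ₂ := hβ₁.trans hβ
  rcases hβ₁.eq_or_lt with rfl | hβ₁
  · rw [mul_zero, mul_zero, sub_self, sub_nonneg]
    exact hφ (mul_nonneg hh₁ hβ₂) (mul_nonneg hh₂ hβ₂) (mul_le_mul_of_nonneg_right hh hβ₂)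
  rcases hh₁.eq_or_lt with rfl | hh₁
  · rw [zero_mul, zero_mul, sub_le_sub_iff_right]
    exact hφ (mul_nonneg hh₂ hβ₁.le) (mul_nonneg hh₂ hβ₂) (mul_le_mul_of_nonneg_left hβ hh₂)
  have hlog : ∀ {h β : ℝ}, 0 < h → 0 < β → φ (h * β) = (φ ∘ exp) (log h + log β) := by
    intro h β hh hβ
    rw [Function.comp_apply, exp_add, exp_log hh, exp_log hβ]
  rw [hlog (hh₁.trans_le hh) hβ₁, hlog hh₁ hβ₁, hlog (hh₁.trans_le hh) (hβ₁.trans_le hβ),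
    hlog hh₁ (hβ₁.trans_le hβ)]
  exact hψ.map_add_sub_map_add_le trivial trivial (log_le_log hh₁ hh) (log_le_log hβ₁ hβ)

theorem stmt_15_general
    -- effort cost c with derivatives c', c'', c''' on [0,∞)
    (c c' c'' c''' : ℝ → ℝ)
    (hc' : ∀ a ∈ Ici (0:ℝ), HasDerivWithinAt c (c' a) (Ici 0) a)
    (hc'' : ∀ a ∈ Ici (0:ℝ), HasDerivWithinAt c' (c'' a) (Ici 0) a)
    (hc''' : ∀ a ∈ Ici (0:ℝ), HasDerivWithinAt c'' (c''' a) (Ici 0) a)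
    (hc'0 : c' 0 = 0)
    (hc''pos : ∀ a ∈ Ici (0:ℝ), 0 < c'' a)
    (hc'''nn : ∀ a > (0:ℝ), 0 ≤ c''' a)
    (hc'''le : ∀ a > (0:ℝ), c''' a * c' a ≤ (c'' a) ^ 2)
    -- φ = (c')⁻¹, a strictly increasing bijection of [0,∞)
    (φ : ℝ → ℝ)
    (hφmem : ∀ y ∈ Ici (0:ℝ), φ y ∈ Ici (0:ℝ))
    (hφright : ∀ y ∈ Ici (0:ℝ), c' (φ y) = y) :
    -- (1) a(h,β) = φ(h·β) is the unique maximizer of a ↦ h·β·a − c(a) on [0,∞)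
    (∀ h ∈ Icc (0:ℝ) 1, ∀ β ∈ Ici (0:ℝ),
      IsMaxOn (fun x => h * β * x - c x) (Ici 0) (φ (h * β)) ∧
      ∀ x ∈ Ici (0:ℝ), IsMaxOn (fun y => h * β * y - c y) (Ici 0) x → x = φ (h * β)) ∧
    -- (2) h ↦ a(h,β) is concave on [0,1]
    (∀ β ∈ Ici (0:ℝ), ConcaveOn ℝ (Icc 0 1) (fun h => φ (h * β))) ∧
    -- (3) a has increasing differences in (h,β)
    (∀ h₁ h₂ β₁ β₂ : ℝ, 0 ≤ h₁ → h₁ ≤ h₂ → h₂ ≤ 1 → 0 ≤ β₁ → β₁ ≤ β₂ →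
      φ (h₂ * β₁) - φ (h₁ * β₁) ≤ φ (h₂ * β₂) - φ (h₁ * β₂)) ∧
    -- (4) R(h,β) = β·φ(h·β) has strictly increasing differences in (h,β)
    (∀ h₁ h₂ β₁ β₂ : ℝ, 0 ≤ h₁ → h₁ < h₂ → h₂ ≤ 1 → 0 ≤ β₁ → β₁ < β₂ →
      β₁ * φ (h₂ * β₁) - β₁ * φ (h₁ * β₁) < β₂ * φ (h₂ * β₂) - β₂ * φ (h₁ * β₂)) := by
  have hc'_cont : ContinuousOn c' (Ici 0) := fun a ha => (hc'' a ha).continuousWithinAt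
  have hc'_mono : StrictMonoOn c' (Ici 0) :=
    strictMonoOn_of_hasDerivWithinAt_pos (convex_Ici 0) hc'_cont
      (hasDerivWithinAt_interior hc'') fun x hx => hc''pos x (interior_subset hx)
  have hc'_conv : ConvexOn ℝ (Ici 0) c' :=
    convexOn_of_hasDerivWithinAt2_nonneg (convex_Ici 0) hc'_cont (hasDerivWithinAt_interior hc'')
      (hasDerivWithinAt_interior hc''') fun x hx => hc'''nn x (by rwa [interior_Ici] at hx)
  have hφ_mono : StrictMonoOn φ (Ici 0) := hc'_mono.strictMonoOn_of_rightInvOn hφmem hφright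
  have hψ : ConvexOn ℝ univ (φ ∘ exp) := by
    refine convexOn_comp_exp_of_rightInvOn ?_ hc'_mono hc'0 hφmem hφright
    exact concaveOn_log_comp_of_mul_le_sq isOpen_Ioi (convex_Ioi 0)
      (fun x hx => (hc'' x (Ioi_subset_Ici_self hx)).hasDerivAt (Ici_mem_nhds hx))
      (fun x hx => (hc''' x (Ioi_subset_Ici_self hx)).hasDerivAt (Ici_mem_nhds hx))
      (fun x hx => hc'0 ▸ hc'_mono self_mem_Ici (Ioi_subset_Ici_self hx) hx) hc'''le
  have hφ_diff := sub_le_sub_of_convexOn_comp_exp hφ_mono.monotoneOn hψ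
  refine ⟨fun h hh β hβ => ?_, fun β hβ => ?_,
    fun _ _ _ _ hh₁ hh _ hβ₁ hβ => hφ_diff hh₁ hh hβ₁ hβ, ?_⟩
  · have hhβ : h * β ∈ Ici 0 := mul_nonneg hh.1 hβ
    have hmax := fun x (hx : x ∈ Ici 0) =>
      (strictConvexOn_of_hasDerivWithinAt (convex_Ici 0) hc' hc'_mono).isMaxOn_sub_iff
        (hφmem _ hhβ) (hφright _ hhβ ▸ hc' _ (hφmem _ hhβ)) hx
    exact ⟨(hmax _ (hφmem _ hhβ)).2 rfl, fun x hx hxmax => (hmax x hx).1 hxmax⟩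
  · have hφ_conc := hc'_conv.concaveOn_of_rightInvOn hc'_mono (convex_Ici 0) hφmem hφright
    exact (hφ_conc.comp_linearMap (LinearMap.mulRight ℝ β)).subset
      (fun h hh => mul_nonneg hh.1 hβ) (convex_Icc 0 1)
  · intro h₁ h₂ β₁ β₂ hh₁ hh _ hβ₁ hβ
    have hβ₂ : 0 < β₂ := hβ₁.trans_lt hβ
    have hΔ : φ (h₁ * β₂) < φ (h₂ * β₂) := hφ_mono (mul_nonneg hh₁ hβ₂.le)
      (mul_nonneg (hh₁.trans hh.le) hβ₂.le) (mul_lt_mul_of_pos_right hh hβ₂)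
    nlinarith [hφ_diff hh₁ hh.le hβ₁ hβ.le]

theorem stmt_15
    -- effort cost c with derivatives c', c'', c''' on [0,∞)
    (c c' c'' c''' : ℝ → ℝ)
    (hc' : ∀ a ∈ Ici (0:ℝ), HasDerivWithinAt c (c' a) (Ici 0) a)
    (hc'' : ∀ a ∈ Ici (0:ℝ), HasDerivWithinAt c' (c'' a) (Ici 0) a)
    (hc''' : ∀ a ∈ Ici (0:ℝ), HasDerivWithinAt c'' (c''' a) (Ici 0) a)
    (hc'''cont : ContinuousOn c''' (Ici 0))
    (hc'0 : c' 0 = 0)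
    (hc''pos : ∀ a ∈ Ici (0:ℝ), 0 < c'' a)
    (hc'top : Tendsto c' atTop atTop)
    (hc'''nn : ∀ a > (0:ℝ), 0 ≤ c''' a)
    (hc'''le : ∀ a > (0:ℝ), c''' a * c' a ≤ (c'' a) ^ 2)
    -- φ = (c')⁻¹, a strictly increasing bijection of [0,∞)
    (φ : ℝ → ℝ)
    (hφmem : ∀ y ∈ Ici (0:ℝ), φ y ∈ Ici (0:ℝ))
    (hφright : ∀ y ∈ Ici (0:ℝ), c' (φ y) = y)
    (hφleft : ∀ a ∈ Ici (0:ℝ), φ (c' a) = a) :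
    -- (1) a(h,β) = φ(h·β) is the unique maximizer of a ↦ h·β·a − c(a) on [0,∞)
    (∀ h ∈ Icc (0:ℝ) 1, ∀ β ∈ Ici (0:ℝ),
      IsMaxOn (fun x => h * β * x - c x) (Ici 0) (φ (h * β)) ∧
      ∀ x ∈ Ici (0:ℝ), IsMaxOn (fun y => h * β * y - c y) (Ici 0) x → x = φ (h * β)) ∧
    -- (2) h ↦ a(h,β) is concave on [0,1]
    (∀ β ∈ Ici (0:ℝ), ConcaveOn ℝ (Icc 0 1) (fun h => φ (h * β))) ∧
    -- (3) a has increasing differences in (h,β)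
    (∀ h₁ h₂ β₁ β₂ : ℝ, 0 ≤ h₁ → h₁ ≤ h₂ → h₂ ≤ 1 → 0 ≤ β₁ → β₁ ≤ β₂ →
      φ (h₂ * β₁) - φ (h₁ * β₁) ≤ φ (h₂ * β₂) - φ (h₁ * β₂)) ∧
    -- (4) R(h,β) = β·φ(h·β) has strictly increasing differences in (h,β)
    (∀ h₁ h₂ β₁ β₂ : ℝ, 0 ≤ h₁ → h₁ < h₂ → h₂ ≤ 1 → 0 ≤ β₁ → β₁ < β₂ →
      β₁ * φ (h₂ * β₁) - β₁ * φ (h₁ * β₁) < β₂ * φ (h₂ * β₂) - β₂ * φ (h₁ * β₂)) :=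
  stmt_15_general c c' c'' c''' hc' hc'' hc''' hc'0 hc''pos hc'''nn hc'''le φ hφmem hφright
end

section
/- (Proposition 7, Appendix A.2: Assumption 2 holds generically) There exists a set C ⊂ ℝ of Lebesgue measure zero such that for every Δ ∉ C, every fixed point of ψ̃_Δ in [βlo, βhi] is a strict crossing of the diagonal. -/
/-
Write φ(β) = R(h(β), β*) - R(h(β), β), so that Δ - φ(β) is the value at x = β of the
quantity whose absolute value ψ̃_Δ(β) minimises. Since that quantity increases in x, ψ̃_Δ moves
a belief β down when φ(β) < Δ and up when Δ < φ(β) (as far as the interval allows). Hence a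
fixed point in the interior solves φ(β̂) = Δ, and if φ'(β̂) ≠ 0 the sign of φ - Δ near β̂ decides
the direction of the crossing; a fixed point at an endpoint where φ ≠ Δ crosses from above.
The bad set of Δ is the set of critical values of φ together with φ(βlo) and φ(βhi), which is
null by the one-dimensional Sard lemma.
-/

open Set

/-- `F` crosses the diagonal strictly from above at `x` (within the interval `[a,b]`). -/
def CrossesFromAbove (F : ℝ → ℝ) (a b x : ℝ) : Prop :=
  ∃ ε > 0, (∀ t ∈ Ioo (x - ε) x ∩ Icc a b, t < F t) ∧
    (∀ t ∈ Ioo x (x + ε) ∩ Icc a b, F t < t)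

/-- `F` crosses the diagonal strictly from below at `x` (within the interval `[a,b]`). -/
def CrossesFromBelow (F : ℝ → ℝ) (a b x : ℝ) : Prop :=
  ∃ ε > 0, (∀ t ∈ Ioo (x - ε) x ∩ Icc a b, F t < t) ∧
    (∀ t ∈ Ioo x (x + ε) ∩ Icc a b, t < F t)

open Filter Topology SignType MeasureTheory

def IsUniqueMinOn (f : ℝ → ℝ) (s : Set ℝ) (m : ℝ) : Prop :=
  m ∈ s ∧ ∀ x ∈ s, x ≠ m → f m < f x

theorem StrictMonoOn.const_add_sub {f : ℝ → ℝ} {s : Set ℝ} (hf : StrictMonoOn f s) (c d : ℝ) :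
    StrictMonoOn (fun x => c + f x - d) s :=
  fun _ hx _ hy hxy => sub_lt_sub_right (add_lt_add_right (hf hx hy hxy) c) d

namespace IsUniqueMinOn

variable {f : ℝ → ℝ} {a b β m : ℝ}

theorem lt_of_pos (hmono : StrictMonoOn f (Icc a b)) (hcont : ContinuousOn f (Icc a b))
    (hm : IsUniqueMinOn (fun x => |f x|) (Icc a b) m)
    (hβ : β ∈ Icc a b) (haβ : a < β) (hpos : 0 < f β) : m < β := by
  by_contra! hβm
  have hsub : Ico a β ⊆ Icc a b := Ico_subset_Icc_self.trans (Icc_subset_Icc_right hβ.2)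
  have : NeBot (𝓝[Ico a β] β) := right_nhdsWithin_Ico_neBot haβ
  obtain ⟨x, hx_pos, hx⟩ := ((((hcont β hβ).mono hsub).eventually (lt_mem_nhds hpos)).and
    self_mem_nhdsWithin).exists
  have hfx : f x < f m := (hmono (hsub hx) hβ hx.2).trans_le (hmono.monotoneOn hβ hm.1 hβm)
  refine lt_asymm (hm.2 x (hsub hx) (hx.2.trans_le hβm).ne) ?_
  show |f x| < |f m|
  rwa [abs_of_pos hx_pos, abs_of_pos (hx_pos.trans hfx)]

theorem gt_of_neg (hmono : StrictMonoOn f (Icc a b)) (hcont : ContinuousOn f (Icc a b))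
    (hm : IsUniqueMinOn (fun x => |f x|) (Icc a b) m)
    (hβ : β ∈ Icc a b) (hβb : β < b) (hneg : f β < 0) : β < m := by
  by_contra! hmβ
  have hsub : Ioc β b ⊆ Icc a b := Ioc_subset_Icc_self.trans (Icc_subset_Icc_left hβ.1)
  have : NeBot (𝓝[Ioc β b] β) := left_nhdsWithin_Ioc_neBot hβb
  obtain ⟨x, hx_neg, hx⟩ := ((((hcont β hβ).mono hsub).eventually (gt_mem_nhds hneg)).and
    self_mem_nhdsWithin).exists
  have hfx : f m < f x := (hmono.monotoneOn hm.1 hβ hmβ).trans_lt (hmono hβ (hsub hx) hx.1)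
  refine lt_asymm (hm.2 x (hsub hx) (hmβ.trans_lt hx.1).ne') ?_
  show |f x| < |f m|
  rwa [abs_of_neg hx_neg, abs_of_neg (hfx.trans hx_neg), neg_lt_neg_iff]

end IsUniqueMinOn

section Crossing

variable {F φ : ℝ → ℝ} {a b x Δ : ℝ}

theorem crossesFromAbove_of_eventually_sign
    (hup : ∀ t ∈ Icc a b, t < b → Δ < φ t → t < F t)
    (hdown : ∀ t ∈ Icc a b, a < t → φ t < Δ → F t < t) (hx : x ∈ Icc a b)
    (h : ∀ᶠ t in 𝓝[≠] x, t ∈ Icc a b → sign (φ t - Δ) = sign (x - t)) :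
    CrossesFromAbove F a b x := by
  obtain ⟨ε, hε, hball⟩ := Metric.eventually_nhds_iff_ball.1 (eventually_nhdsWithin_iff.1 h)
  rw [Real.ball_eq_Ioo] at hball
  refine ⟨ε, hε, fun t ⟨ht, htI⟩ => hup t htI (ht.2.trans_le hx.2) ?_,
    fun t ⟨ht, htI⟩ => hdown t htI (hx.1.trans_lt ht.1) ?_⟩
  · have := hball t ⟨ht.1, by linarith [ht.2]⟩ ht.2.ne htI
    rw [sign_pos (sub_pos.2 ht.2), sign_eq_one_iff] at this
    linarith
  · have := hball t ⟨by linarith [ht.1], ht.2⟩ ht.1.ne' htI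
    rw [sign_neg (sub_neg.2 ht.1), sign_eq_neg_one_iff] at this
    linarith

theorem crossesFromBelow_of_eventually_sign
    (hup : ∀ t ∈ Icc a b, t < b → Δ < φ t → t < F t)
    (hdown : ∀ t ∈ Icc a b, a < t → φ t < Δ → F t < t) (hx : x ∈ Ioo a b)
    (h : ∀ᶠ t in 𝓝 x, sign (φ t - Δ) = sign (t - x)) :
    CrossesFromBelow F a b x := by
  obtain ⟨ε, hε, hball⟩ := Metric.eventually_nhds_iff_ball.1
    (h.and ((eventually_gt_nhds hx.1).and (eventually_lt_nhds hx.2)))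
  rw [Real.ball_eq_Ioo] at hball
  refine ⟨ε, hε, fun t ⟨ht, htI⟩ => ?_, fun t ⟨ht, htI⟩ => ?_⟩
  · obtain ⟨hsign, hat, -⟩ := hball t ⟨ht.1, by linarith [ht.2]⟩
    rw [sign_neg (sub_neg.2 ht.2), sign_eq_neg_one_iff, sub_neg] at hsign
    exact hdown t htI hat hsign
  · obtain ⟨hsign, -, htb⟩ := hball t ⟨by linarith [ht.1], ht.2⟩
    rw [sign_pos (sub_pos.2 ht.1), sign_eq_one_iff, sub_pos] at hsign
    exact hup t htI htb hsign

theorem crossesFromAbove_or_crossesFromBelow_of_isFixedPt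
    (hup : ∀ t ∈ Icc a b, t < b → Δ < φ t → t < F t)
    (hdown : ∀ t ∈ Icc a b, a < t → φ t < Δ → F t < t)
    (hφ : ∀ t ∈ Icc a b, DifferentiableAt ℝ φ t) (hab : a < b) (ha : φ a ≠ Δ) (hb : φ b ≠ Δ)
    (hreg : ∀ t ∈ Icc a b, φ t = Δ → deriv φ t ≠ 0) (hx : x ∈ Icc a b) (hfix : F x = x) :
    CrossesFromAbove F a b x ∨ CrossesFromBelow F a b x := by
  have hge : a < x → Δ ≤ φ x := fun hax => not_lt.1 fun h => (hdown x hx hax h).ne hfix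
  have hle : x < b → φ x ≤ Δ := fun hxb => not_lt.1 fun h => (hup x hx hxb h).ne' hfix
  rcases hx.1.eq_or_lt with hax | hax
  · have hlt : φ x < Δ := (hle (hax ▸ hab)).lt_of_ne (hax ▸ ha)
    refine .inl (crossesFromAbove_of_eventually_sign hup hdown hx ?_)
    filter_upwards [nhdsWithin_le_nhds ((hφ x hx).continuousAt.eventually (gt_mem_nhds hlt)),
      self_mem_nhdsWithin] with t ht htx htI
    rw [sign_neg (sub_neg.2 ht), sign_neg (sub_neg.2 ((hax ▸ htI.1).lt_of_ne' htx))]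
  rcases hx.2.eq_or_lt with hxb | hxb
  · have hlt : Δ < φ x := (hge hax).lt_of_ne' (hxb ▸ hb)
    refine .inl (crossesFromAbove_of_eventually_sign hup hdown hx ?_)
    filter_upwards [nhdsWithin_le_nhds ((hφ x hx).continuousAt.eventually (lt_mem_nhds hlt)),
      self_mem_nhdsWithin] with t ht htx htI
    rw [sign_pos (sub_pos.2 ht), sign_pos (sub_pos.2 ((hxb ▸ htI.2).lt_of_ne htx))]
  have hroot : φ x - Δ = 0 := sub_eq_zero.2 ((hle hxb).antisymm (hge hax))
  have hderiv : deriv (fun t => φ t - Δ) x = deriv φ x := deriv_sub_const Δ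
  rcases (hreg x hx (sub_eq_zero.1 hroot)).lt_or_gt with hneg | hpos
  · refine .inl (crossesFromAbove_of_eventually_sign hup hdown hx ?_)
    filter_upwards [nhdsWithin_le_nhds (eventually_nhdsWithin_sign_eq_of_deriv_neg
      (f := fun t => φ t - Δ) (hderiv ▸ hneg) hroot)] with t ht _ using ht
  · exact .inr (crossesFromBelow_of_eventually_sign hup hdown ⟨hax, hxb⟩
      (eventually_nhdsWithin_sign_eq_of_deriv_pos (f := fun t => φ t - Δ) (hderiv ▸ hpos) hroot))

end Crossing

theorem volume_image_setOf_deriv_eq_zero {φ : ℝ → ℝ} {s : Set ℝ}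
    (hφ : ∀ t ∈ s, DifferentiableAt ℝ φ t) : volume (φ '' {t ∈ s | deriv φ t = 0}) = 0 := by
  refine addHaar_image_eq_zero_of_det_fderivWithin_eq_zero volume (f' := fun _ => 0)
    (fun t ht => ?_) fun _ _ => by simp
  have := (hφ t ht.1).hasDerivAt
  rw [ht.2] at this
  simpa using this.hasFDerivAt.hasFDerivWithinAt

theorem differentiableAt_uncurry_comp_of_contDiffOn {R : ℝ → ℝ → ℝ} {H u : ℝ → ℝ} {β : ℝ}
    (hR : ContDiffOn ℝ 1 (Function.uncurry R) (Icc 0 1 ×ˢ Ici 0))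
    (hH : DifferentiableAt ℝ H β) (hu : DifferentiableAt ℝ u β)
    (hHβ : H β ∈ Ioo 0 1) (huβ : 0 < u β) : DifferentiableAt ℝ (fun t => R (H t) (u t)) β := by
  have hRβ : DifferentiableAt ℝ (Function.uncurry R) (H β, u β) :=
    (hR.differentiableOn one_ne_zero).differentiableAt
      (prod_mem_nhds (Icc_mem_nhds hHβ.1 hHβ.2) (Ici_mem_nhds huβ))
  exact hRβ.comp β (hH.prodMk hu)

theorem stmt_16_general
    (βlo βstar βhi : ℝ)
    (hlo : 0 < βlo) (hls : βlo < βstar) (hsh : βstar < βhi)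
    (R : ℝ → ℝ → ℝ)
    (hRβ : ∀ h ∈ Ioc (0:ℝ) 1, StrictMonoOn (fun β => R h β) (Ici 0))
    -- R and H are continuously differentiable, with ∂R/∂β > 0
    (hRdiff : ContDiffOn ℝ 1 (fun p : ℝ × ℝ => R p.1 p.2) (Icc (0:ℝ) 1 ×ˢ Ici (0:ℝ)))
    (H : ℝ → ℝ)
    (hHdiff : ContDiffOn ℝ 1 H (Ici 0))
    (hHin : ∀ β > (0:ℝ), H β ∈ Ioo (0:ℝ) 1)
    (ψ : ℝ → ℝ → ℝ)
    (hψ : ∀ Δ : ℝ, ∀ β ∈ Icc βlo βhi,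
      ψ Δ β ∈ Icc βlo βhi ∧
      ∀ x ∈ Icc βlo βhi, x ≠ ψ Δ β →
        |Δ + R (H β) (ψ Δ β) - R (H β) βstar| < |Δ + R (H β) x - R (H β) βstar|) :
    ∃ C : Set ℝ, MeasureTheory.volume C = 0 ∧
      ∀ Δ : ℝ, Δ ∉ C → ∀ bhat ∈ Icc βlo βhi, ψ Δ bhat = bhat →
        CrossesFromAbove (ψ Δ) βlo βhi bhat ∨ CrossesFromBelow (ψ Δ) βlo βhi bhat := by
  have hpos : ∀ β ∈ Icc βlo βhi, 0 < β := fun β hβ => hlo.trans_le hβ.1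
  have hsub : Icc βlo βhi ⊆ Ici 0 := fun β hβ => (hpos β hβ).le
  have hH : ∀ β ∈ Icc βlo βhi, DifferentiableAt ℝ H β := fun β hβ =>
    (hHdiff.differentiableOn one_ne_zero).differentiableAt (Ici_mem_nhds (hpos β hβ))
  set φ : ℝ → ℝ := fun β => R (H β) βstar - R (H β) β
  have hφ : ∀ β ∈ Icc βlo βhi, DifferentiableAt ℝ φ β := fun β hβ =>
    (differentiableAt_uncurry_comp_of_contDiffOn hRdiff (hH β hβ) (differentiableAt_const βstar)
      (hHin β (hpos β hβ)) (hlo.trans hls)).sub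
    (differentiableAt_uncurry_comp_of_contDiffOn hRdiff (hH β hβ) differentiableAt_id
      (hHin β (hpos β hβ)) (hpos β hβ))
  have hmono : ∀ Δ, ∀ β ∈ Icc βlo βhi,
      StrictMonoOn (fun x => Δ + R (H β) x - R (H β) βstar) (Icc βlo βhi) := fun Δ β hβ =>
    ((hRβ _ (Ioo_subset_Ioc_self (hHin β (hpos β hβ)))).mono hsub).const_add_sub Δ _
  have hcont : ∀ Δ, ∀ β ∈ Icc βlo βhi,
      ContinuousOn (fun x => Δ + R (H β) x - R (H β) βstar) (Icc βlo βhi) := fun Δ β hβ =>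
    (continuousOn_const.add ((hRdiff.continuousOn.uncurry_left (f := R) (H β)
      (Ioo_subset_Icc_self (hHin β (hpos β hβ)))).mono hsub)).sub continuousOn_const
  refine ⟨φ '' {β ∈ Icc βlo βhi | deriv φ β = 0} ∪ {φ βlo, φ βhi},
    measure_union_null (volume_image_setOf_deriv_eq_zero hφ)
      ((toFinite _).countable.measure_zero _), fun Δ hΔ β hβ hfix => ?_⟩
  simp only [mem_union, mem_image, mem_ofPred_eq, mem_insert_iff, mem_singleton_iff,
    not_or, not_exists, not_and] at hΔ
  refine crossesFromAbove_or_crossesFromBelow_of_isFixedPt (φ := φ) (Δ := Δ)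
    (fun t ht htb hlt => IsUniqueMinOn.gt_of_neg (hmono Δ t ht) (hcont Δ t ht) (hψ Δ t ht) ht htb
      (by simp only [φ] at hlt ⊢; linarith))
    (fun t ht hat hlt => IsUniqueMinOn.lt_of_pos (hmono Δ t ht) (hcont Δ t ht) (hψ Δ t ht) ht hat
      (by simp only [φ] at hlt ⊢; linarith))
    hφ (hls.trans hsh) (Ne.symm hΔ.2.1) (Ne.symm hΔ.2.2) (fun t ht hφt hd => hΔ.1 t ⟨ht, hd⟩ hφt)
    hβ hfix

theorem stmt_16
    (βlo βstar βhi : ℝ)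
    (hlo : 0 < βlo) (hls : βlo < βstar) (hsh : βstar < βhi)
    (R : ℝ → ℝ → ℝ)
    (hRcont : ContinuousOn (fun p : ℝ × ℝ => R p.1 p.2) (Icc (0:ℝ) 1 ×ˢ Ici (0:ℝ)))
    (hR0 : ∀ h ∈ Icc (0:ℝ) 1, R h 0 = 0)
    (hR0' : ∀ β ∈ Ici (0:ℝ), R 0 β = 0)
    (hRβ : ∀ h ∈ Ioc (0:ℝ) 1, StrictMonoOn (fun β => R h β) (Ici 0))
    (hRh : ∀ β > (0:ℝ), StrictMonoOn (fun h => R h β) (Icc 0 1))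
    (hRid : ∀ h₁ h₂ β₁ β₂ : ℝ, 0 ≤ h₁ → h₁ < h₂ → h₂ ≤ 1 → 0 ≤ β₁ → β₁ < β₂ →
      R h₂ β₁ - R h₁ β₁ < R h₂ β₂ - R h₁ β₂)
    -- R and H are continuously differentiable, with ∂R/∂β > 0
    (hRdiff : ContDiffOn ℝ 1 (fun p : ℝ × ℝ => R p.1 p.2) (Icc (0:ℝ) 1 ×ˢ Ici (0:ℝ)))
    (hRβderiv : ∀ h ∈ Ioc (0:ℝ) 1, ∀ β > (0:ℝ), ∃ d > (0:ℝ),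
      HasDerivAt (fun β' => R h β') d β)
    (H : ℝ → ℝ)
    (hHcont : ContinuousOn H (Ici 0))
    (hHdiff : ContDiffOn ℝ 1 H (Ici 0))
    (hHmono : StrictMonoOn H (Ici 0))
    (hH0 : H 0 = 0)
    (hHin : ∀ β > (0:ℝ), H β ∈ Ioo (0:ℝ) 1)
    (ψ : ℝ → ℝ → ℝ)
    (hψ : ∀ Δ : ℝ, ∀ β ∈ Icc βlo βhi,
      ψ Δ β ∈ Icc βlo βhi ∧
      ∀ x ∈ Icc βlo βhi, x ≠ ψ Δ β →
        |Δ + R (H β) (ψ Δ β) - R (H β) βstar| < |Δ + R (H β) x - R (H β) βstar|) :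
    ∃ C : Set ℝ, MeasureTheory.volume C = 0 ∧
      ∀ Δ : ℝ, Δ ∉ C → ∀ bhat ∈ Icc βlo βhi, ψ Δ bhat = bhat →
        CrossesFromAbove (ψ Δ) βlo βhi bhat ∨ CrossesFromBelow (ψ Δ) βlo βhi bhat :=
  stmt_16_general βlo βstar βhi hlo hls hsh R hRβ hRdiff H hHdiff hHin ψ hψ
end

section
/- (Core of Proposition 4: comparison with first-order misspecification) Let β* ∈ ℝ and let f : ℝ² → ℝ be continuously differentiable on a neighborhood of (β*, β*), with f(β*, β*) = 0, ∂f/∂x(β*, β*) > 0, and ∂f/∂y(β*, β*) > 0. Then there exist δ > 0 and η > 0 such that for every Δ with 0 < |Δ| < δ: the equation f(x, x) = −Δ has a unique solution x₁(Δ) in (β* − η, β* + η), the equation f(x, β*) = −Δ has a unique solution x₂(Δ) in (β* − η, β* + η), and |x₁(Δ) − β*| < |x₂(Δ) − β*|. -/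
/-!
Strict differentiability of `f` at `(β*, β*)` makes both sections `x ↦ f (x, x)` and
`x ↦ f (x, β*)` uniformly close to linear near `β*`: with slopes `∂ₓf + ∂ᵧf` and `∂ₓf`, and errors
at most `ε |x - y|` for a small `ε`. Such a function is injective, attains every small value by the
intermediate value theorem, and solves `g x = -Δ` at a distance from `β*` between
`|Δ| / (m + ε)` and `|Δ| / (m - ε)`. As `∂ᵧf > 0`, the diagonal section is strictly steeper, so it
reaches `-Δ` closer to `β*`.
-/

open Set

def ApproxLinearOn (g : ℝ → ℝ) (m ε : ℝ) (s : Set ℝ) : Prop :=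
  ∀ x ∈ s, ∀ y ∈ s, |g x - g y - m * (x - y)| ≤ ε * |x - y|

namespace ApproxLinearOn

variable {g : ℝ → ℝ} {m ε : ℝ} {s : Set ℝ}

theorem mono {t : Set ℝ} (h : ApproxLinearOn g m ε s) (hts : t ⊆ s) :
    ApproxLinearOn g m ε t :=
  fun x hx y hy => h x (hts hx) y (hts hy)

theorem abs_sub_le (h : ApproxLinearOn g m ε s) {x y : ℝ} (hx : x ∈ s) (hy : y ∈ s) :
    |g x - g y| ≤ (|m| + ε) * |x - y| := by
  have := abs_sub_abs_le_abs_sub (g x - g y) (m * (x - y))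
  rw [abs_mul] at this
  linarith [h x hx y hy]

theorem le_abs_sub (h : ApproxLinearOn g m ε s) {x y : ℝ} (hx : x ∈ s) (hy : y ∈ s) :
    (|m| - ε) * |x - y| ≤ |g x - g y| := by
  have := abs_sub_abs_le_abs_sub (m * (x - y)) (g x - g y)
  rw [abs_mul, abs_sub_comm (m * _)] at this
  linarith [h x hx y hy]

theorem continuousOn (h : ApproxLinearOn g m ε s) : ContinuousOn g s := by
  refine (LipschitzOnWith.of_dist_le_mul (K := Real.toNNReal (|m| + ε))
    fun x hx y hy => ?_).continuousOn
  simp only [Real.dist_eq]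
  exact (h.abs_sub_le hx hy).trans
    (mul_le_mul_of_nonneg_right (Real.le_coe_toNNReal _) (abs_nonneg _))

theorem injOn (h : ApproxLinearOn g m ε s) (hε : ε < |m|) : InjOn g s := by
  intro x hx y hy hxy
  have := h.le_abs_sub hx hy
  rw [hxy, sub_self, abs_zero] at this
  have : |x - y| = 0 := by nlinarith [abs_nonneg (x - y)]
  exact sub_eq_zero.mp (abs_eq_zero.mp this)

theorem exists_mem_Icc_eq {c r v : ℝ} (h : ApproxLinearOn g m ε (Icc (c - r) (c + r)))
    (hr : 0 ≤ r) (hc : g c = 0) (hv : |v| ≤ (m - ε) * r) :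
    ∃ x ∈ Icc (c - r) (c + r), g x = v := by
  have hcmem : c ∈ Icc (c - r) (c + r) := ⟨by linarith, by linarith⟩
  have hlo := h (c - r) ⟨le_rfl, by linarith⟩ c hcmem
  have hhi := h (c + r) ⟨by linarith, le_rfl⟩ c hcmem
  rw [hc, sub_zero, show c - r - c = -r by ring, abs_neg, abs_of_nonneg hr] at hlo
  rw [hc, sub_zero, show c + r - c = r by ring, abs_of_nonneg hr] at hhi
  have hvmem : v ∈ Icc (g (c - r)) (g (c + r)) :=
    ⟨by linarith [(abs_le.mp hlo).2, neg_abs_le v], by linarith [(abs_le.mp hhi).1, le_abs_self v]⟩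
  exact intermediate_value_Icc (by linarith) h.continuousOn hvmem

theorem existsUnique_mem_Ioo_eq {c η v : ℝ} (h : ApproxLinearOn g m ε (Ioo (c - η) (c + η)))
    (hε : ε < m) (hc : g c = 0) (hv : |v| < (m - ε) * η) :
    ∃! x, x ∈ Ioo (c - η) (c + η) ∧ g x = v := by
  have hmε : 0 < m - ε := sub_pos.mpr hε
  set r := |v| / (m - ε)
  have hr : 0 ≤ r := by positivity
  have hrη : r < η := (div_lt_iff₀' hmε).mpr hv
  have hIcc : Icc (c - r) (c + r) ⊆ Ioo (c - η) (c + η) :=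
    Icc_subset_Ioo (by linarith) (by linarith)
  obtain ⟨x, hx, hgx⟩ := (h.mono hIcc).exists_mem_Icc_eq hr hc (mul_div_cancel₀ _ hmε.ne').ge
  refine ⟨x, ⟨hIcc hx, hgx⟩, fun y ⟨hy, hgy⟩ => ?_⟩
  exact h.injOn (hε.trans_le (le_abs_self m)) hy (hIcc hx) (hgy.trans hgx.symm)

theorem abs_sub_lt_of_steeper {g₁ g₂ : ℝ → ℝ} {m₁ m₂ c x₁ x₂ : ℝ}
    (h₁ : ApproxLinearOn g₁ m₁ ε s) (h₂ : ApproxLinearOn g₂ m₂ ε s)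
    (hsteep : |m₂| + ε < |m₁| - ε) (hc : c ∈ s) (hx₁ : x₁ ∈ s) (hx₂ : x₂ ∈ s)
    (hg₁c : g₁ c = 0) (hg₂c : g₂ c = 0) (heq : g₁ x₁ = g₂ x₂) (hne : g₂ x₂ ≠ 0) :
    |x₁ - c| < |x₂ - c| := by
  have hlow := h₁.le_abs_sub hx₁ hc
  have hup := h₂.abs_sub_le hx₂ hc
  rw [hg₁c, sub_zero, heq] at hlow
  rw [hg₂c, sub_zero] at hup
  have hx₂c : 0 < |x₂ - c| := by
    by_contra hle
    have : |x₂ - c| = 0 := le_antisymm (not_lt.mp hle) (abs_nonneg _)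
    rw [this, mul_zero] at hup
    exact hne (abs_nonpos_iff.mp hup)
  have hslope : 0 < |m₁| - ε := by
    have : 0 < (|m₂| + ε) * |x₂ - c| := (abs_pos.mpr hne).trans_le hup
    linarith [(pos_iff_pos_of_mul_pos this).mpr hx₂c]
  refine lt_of_mul_lt_mul_left ?_ hslope.le
  calc (|m₁| - ε) * |x₁ - c| ≤ (|m₂| + ε) * |x₂ - c| := hlow.trans hup
    _ < (|m₁| - ε) * |x₂ - c| := mul_lt_mul_of_pos_right hsteep hx₂c

end ApproxLinearOn

theorem HasStrictDerivAt.exists_approxLinearOn {g : ℝ → ℝ} {m c ε : ℝ}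
    (h : HasStrictDerivAt g m c) (hε : 0 < ε) :
    ∃ η > 0, ApproxLinearOn g m ε (Ioo (c - η) (c + η)) := by
  have hev := (hasDerivAtFilter_iff_isLittleO.mp h).def hε
  rw [nhds_prod_eq, Metric.nhds_basis_ball.prod_self.eventually_iff] at hev
  obtain ⟨η, hη, hball⟩ := hev
  refine ⟨η, hη, fun x hx y hy => ?_⟩
  rw [← Real.ball_eq_Ioo] at hx hy
  simpa only [Real.norm_eq_abs, smul_eq_mul, mul_comm] using hball (mk_mem_prod hx hy)

section PartialDerivatives

variable {𝕜 G : Type*} [NontriviallyNormedField 𝕜] [NormedAddCommGroup G] [NormedSpace 𝕜 G]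
  {f : 𝕜 × 𝕜 → G} {L : 𝕜 × 𝕜 →L[𝕜] G}

theorem HasStrictFDerivAt.hasStrictDerivAt_diag {c : 𝕜} (h : HasStrictFDerivAt f L (c, c)) :
    HasStrictDerivAt (fun x => f (x, x)) (L (1, 0) + L (0, 1)) c := by
  have := h.comp_hasStrictDerivAt (f := fun x => (x, x)) c
    ((hasStrictDerivAt_id c).prodMk (hasStrictDerivAt_id c))
  rwa [← map_add, Prod.mk_add_mk, add_zero, zero_add]

theorem HasStrictFDerivAt.hasStrictDerivAt_left {x y : 𝕜} (h : HasStrictFDerivAt f L (x, y)) :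
    HasStrictDerivAt (fun t => f (t, y)) (L (1, 0)) x :=
  h.comp_hasStrictDerivAt (f := fun t => (t, y)) x
    ((hasStrictDerivAt_id x).prodMk (hasStrictDerivAt_const x y))

end PartialDerivatives

theorem stmt_18
    (βstar : ℝ) (f : ℝ × ℝ → ℝ)
    (U : Set (ℝ × ℝ)) (hU : U ∈ nhds ((βstar, βstar) : ℝ × ℝ))
    (hf : ContDiffOn ℝ 1 f U)
    (hf0 : f (βstar, βstar) = 0)
    (hfx : 0 < fderiv ℝ f (βstar, βstar) (1, 0))
    (hfy : 0 < fderiv ℝ f (βstar, βstar) (0, 1)) :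
    ∃ δ > (0:ℝ), ∃ η > (0:ℝ), ∀ Δ : ℝ, 0 < |Δ| → |Δ| < δ →
      (∃! x : ℝ, x ∈ Ioo (βstar - η) (βstar + η) ∧ f (x, x) = -Δ) ∧
      (∃! x : ℝ, x ∈ Ioo (βstar - η) (βstar + η) ∧ f (x, βstar) = -Δ) ∧
      ∀ x₁ x₂ : ℝ,
        x₁ ∈ Ioo (βstar - η) (βstar + η) → f (x₁, x₁) = -Δ →
        x₂ ∈ Ioo (βstar - η) (βstar + η) → f (x₂, βstar) = -Δ →
        |x₁ - βstar| < |x₂ - βstar| := by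
  set a := fderiv ℝ f (βstar, βstar) (1, 0)
  set b := fderiv ℝ f (βstar, βstar) (0, 1)
  have hstrict := (hf.contDiffAt hU).hasStrictFDerivAt one_ne_zero
  -- `ε < a` makes both sections solvable; `2 ε < b` keeps the diagonal strictly steeper.
  set ε := min a b / 3 with hε_def
  have hε : 0 < ε := by have := lt_min hfx hfy; positivity
  have hεa : ε < a := by have := min_le_left a b; linarith [hε_def]
  have hεb : 2 * ε < b := by have := min_le_right a b; linarith [hε_def]
  obtain ⟨η₁, hη₁, hdiag⟩ := hstrict.hasStrictDerivAt_diag.exists_approxLinearOn hε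
  obtain ⟨η₂, hη₂, hleft⟩ := hstrict.hasStrictDerivAt_left.exists_approxLinearOn hε
  set η := min η₁ η₂
  have hη : 0 < η := lt_min hη₁ hη₂
  have hη₁η := min_le_left η₁ η₂
  have hη₂η := min_le_right η₁ η₂
  have h₁ : ApproxLinearOn (fun x => f (x, x)) (a + b) ε (Ioo (βstar - η) (βstar + η)) :=
    hdiag.mono (Ioo_subset_Ioo (by linarith) (by linarith))
  have h₂ : ApproxLinearOn (fun x => f (x, βstar)) a ε (Ioo (βstar - η) (βstar + η)) :=
    hleft.mono (Ioo_subset_Ioo (by linarith) (by linarith))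
  refine ⟨(a - ε) * η, mul_pos (sub_pos.mpr hεa) hη, η, hη, fun Δ hΔ hΔδ => ?_⟩
  have hv₂ : |-Δ| < (a - ε) * η := by rwa [abs_neg]
  have hv₁ : |-Δ| < (a + b - ε) * η := hv₂.trans_le (by gcongr; linarith)
  refine ⟨h₁.existsUnique_mem_Ioo_eq (by linarith) hf0 hv₁, h₂.existsUnique_mem_Ioo_eq hεa hf0 hv₂,
    fun x₁ x₂ hx₁ hfx₁ hx₂ hfx₂ => ?_⟩
  have hsteep : |a| + ε < |a + b| - ε := by
    rw [abs_of_pos hfx, abs_of_pos (by linarith)]; linarith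
  exact h₁.abs_sub_lt_of_steeper h₂ hsteep ⟨by linarith, by linarith⟩ hx₁ hx₂ hf0 hf0
    (hfx₁.trans hfx₂.symm) (hfx₂ ▸ neg_ne_zero.mpr (abs_pos.mp hΔ))
end
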